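/- arXiv:1502.06844 — 5 statements merged into one kernel-verified Lean document; each statement's English description precedes it below -/
import Mathlib

section
/- Let n ≥ 1 and let a_0, a_1, …, a_n be real numbers with 0 < a_0 < a_1 < ⋯ < a_n. Then every complex zero z of the polynomial p(z) = Σ_{k=0}^{n} a_k z^k satisfies |z| ≤ 1 (all zeros lie in the closed unit disk). -/
/-!
Multiplying by `1 - z` turns `p(z) = 0` into
`a n * z ^ (n + 1) = a 0 + ∑ k < n, (a (k + 1) - a k) * z ^ (k + 1)`.
All coefficients on the right are nonnegative and sum to `a n`, so for `‖z‖ > 1` the right side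
has norm at most `a n * ‖z‖ ^ n`, which is smaller than the norm `a n * ‖z‖ ^ (n + 1)` of the left.
-/

open Finset

theorem one_sub_mul_sum_range_succ {R : Type*} [CommRing R] (a : ℕ → R) (z : R) (n : ℕ) :
    (1 - z) * ∑ k ∈ range (n + 1), a k * z ^ k =
      a 0 + ∑ k ∈ range n, (a (k + 1) - a k) * z ^ (k + 1) - a n * z ^ (n + 1) := by
  induction n with
  | zero => simp only [zero_add, sum_range_one, range_zero, sum_empty]; ring
  | succ n ih =>
    rw [sum_range_succ, mul_add, ih, sum_range_succ]
    ring

theorem apply_zero_le_of_forall_le_succ {a : ℕ → ℝ} {n : ℕ} (hmono : ∀ k < n, a k ≤ a (k + 1)) :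
    a 0 ≤ a n := by
  have hsum : 0 ≤ ∑ k ∈ range n, (a (k + 1) - a k) :=
    sum_nonneg fun k hk => sub_nonneg.mpr (hmono k (mem_range.mp hk))
  linarith [sum_range_sub a n]

section RCLike

variable {𝕜 : Type*} [RCLike 𝕜]

theorem norm_add_sum_sub_mul_pow_le {a : ℕ → ℝ} {n : ℕ} (ha0 : 0 ≤ a 0)
    (hmono : ∀ k < n, a k ≤ a (k + 1)) {z : 𝕜} (hz : 1 ≤ ‖z‖) :
    ‖(a 0 : 𝕜) + ∑ k ∈ range n, ((a (k + 1) : 𝕜) - a k) * z ^ (k + 1)‖ ≤ a n * ‖z‖ ^ n := by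
  have hdiff : ∀ k ∈ range n, 0 ≤ a (k + 1) - a k := fun k hk =>
    sub_nonneg.mpr (hmono k (mem_range.mp hk))
  calc ‖(a 0 : 𝕜) + ∑ k ∈ range n, ((a (k + 1) : 𝕜) - a k) * z ^ (k + 1)‖
      ≤ a 0 + ∑ k ∈ range n, (a (k + 1) - a k) * ‖z‖ ^ (k + 1) := by
        refine (norm_add_le _ _).trans (add_le_add (by simp [abs_of_nonneg ha0]) ?_)
        refine (norm_sum_le _ _).trans (sum_le_sum fun k hk => ?_)
        rw [norm_mul, norm_pow, ← RCLike.ofReal_sub, RCLike.norm_ofReal,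
          abs_of_nonneg (hdiff k hk)]
    _ ≤ a 0 * ‖z‖ ^ n + ∑ k ∈ range n, (a (k + 1) - a k) * ‖z‖ ^ n := by
        gcongr with k hk
        · exact le_mul_of_one_le_right ha0 (one_le_pow₀ hz)
        · exact hdiff k hk
        · exact mem_range.mp hk
    _ = a n * ‖z‖ ^ n := by rw [← sum_mul, sum_range_sub]; ring

theorem norm_le_one_of_sum_eq_zero {a : ℕ → ℝ} {n : ℕ} (ha0 : 0 ≤ a 0) (han : 0 < a n)
    (hmono : ∀ k < n, a k ≤ a (k + 1)) {z : 𝕜}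
    (hz : ∑ k ∈ range (n + 1), (a k : 𝕜) * z ^ k = 0) : ‖z‖ ≤ 1 := by
  by_contra! hz1
  have hkey : (a n : 𝕜) * z ^ (n + 1) =
      a 0 + ∑ k ∈ range n, ((a (k + 1) : 𝕜) - a k) * z ^ (k + 1) := by
    have := one_sub_mul_sum_range_succ (fun k => (a k : 𝕜)) z n
    rw [hz, mul_zero] at this
    linear_combination this
  have hle := norm_add_sum_sub_mul_pow_le (𝕜 := 𝕜) ha0 hmono hz1.le
  rw [← hkey, norm_mul, norm_pow, RCLike.norm_ofReal, abs_of_pos han, pow_succ] at hle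
  have : a n * ‖z‖ ^ n < a n * ‖z‖ ^ n * ‖z‖ :=
    lt_mul_of_one_lt_right (by positivity) hz1
  linarith

end RCLike

theorem enestrom_kakeya_general (n : ℕ) (a : ℕ → ℝ)
    (ha0 : 0 < a 0) (hmono : ∀ k, k < n → a k < a (k + 1))
    (z : ℂ) (hz : ∑ k ∈ Finset.range (n + 1), (a k : ℂ) * z ^ k = 0) :
    ‖z‖ ≤ 1 := by
  have hmono' : ∀ k < n, a k ≤ a (k + 1) := fun k hk => (hmono k hk).le
  have han : 0 < a n := ha0.trans_le (apply_zero_le_of_forall_le_succ hmono')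
  exact norm_le_one_of_sum_eq_zero ha0.le han hmono' hz

/-- **Eneström–Kakeya theorem.** If `0 < a 0 < a 1 < ⋯ < a n` (with `n ≥ 1`), then every
complex zero of the polynomial `p(z) = ∑_{k=0}^{n} a k * z ^ k` satisfies `|z| ≤ 1`. -/
theorem enestrom_kakeya (n : ℕ) (hn : 1 ≤ n) (a : ℕ → ℝ)
    (ha0 : 0 < a 0) (hmono : ∀ k, k < n → a k < a (k + 1))
    (z : ℂ) (hz : ∑ k ∈ Finset.range (n + 1), (a k : ℂ) * z ^ k = 0) :
    ‖z‖ ≤ 1 :=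
  enestrom_kakeya_general n a ha0 hmono z hz
end

section
/- Let n ≥ 1 and let c_0, …, c_n be complex numbers with c_n ≠ 0 such that every zero of the polynomial p(z) = Σ_{k=0}^{n} c_k z^k lies in the closed unit disk {z : |z| ≤ 1}. Define the entire functions A(z) = (1/2)(Σ_{k=0}^{n} c_k e^{ikz} + Σ_{k=0}^{n} conj(c_k) e^{−ikz}) and B(z) = (1/(2i))(Σ_{k=0}^{n} c_k e^{ikz} − Σ_{k=0}^{n} conj(c_k) e^{−ikz}), so that p(e^{iα}) = A(α) + iB(α) with A(α), B(α) real for every real α. Then every complex zero of A is real, and every complex zero of B is real. -/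
open Complex ComplexConjugate Finset Polynomial

/-!
Write `p w = ∑ c k * w ^ k` and `w = exp (I * z)`. Then `A z = (p w + conj (p w')) / 2` and
`B z = (p w - conj (p w')) / (2 * I)`, where `w' = (conj w)⁻¹` is the reflection of `w` in the
unit circle, so a zero of `A` or of `B` forces `‖p w‖ = ‖p w'‖`. Factoring `p` over its roots `r`,
for `‖r‖ ≤ 1 ≤ ‖w‖` each factor satisfies `‖w‖ * ‖w' - r‖ = ‖1 - conj w * r‖ ≤ ‖w - r‖`, hence
`‖w‖ ^ n * ‖p w'‖ ≤ ‖p w‖`, which is strict for `‖w‖ > 1` because `n ≥ 1`. Since `w'' = w`, equal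
norms force `‖w‖ = 1`, i.e. `z` is real.
-/

theorem normSq_sub_sub_normSq_one_sub_conj_mul (w r : ℂ) :
    normSq (w - r) - normSq (1 - conj w * r) = (normSq w - 1) * (1 - normSq r) := by
  simp only [normSq_apply, sub_re, sub_im, mul_re, mul_im, one_re, one_im, conj_re, conj_im]
  ring

theorem norm_one_sub_conj_mul_le (w r : ℂ) (hw : 1 ≤ ‖w‖) (hr : ‖r‖ ≤ 1) :
    ‖1 - conj w * r‖ ≤ ‖w - r‖ := by
  have hw' : 1 ≤ normSq w := by rw [normSq_eq_norm_sq]; nlinarith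
  have hr' : normSq r ≤ 1 := by rw [normSq_eq_norm_sq]; nlinarith [norm_nonneg r]
  rw [← sq_le_sq₀ (norm_nonneg _) (norm_nonneg _), ← normSq_eq_norm_sq, ← normSq_eq_norm_sq]
  nlinarith [normSq_sub_sub_normSq_one_sub_conj_mul w r]

theorem norm_eval_eq_mul_prod_roots (P : ℂ[X]) (x : ℂ) :
    ‖P.eval x‖ = ‖P.leadingCoeff‖ * (P.roots.map fun r => ‖x - r‖).prod := by
  conv_lhs =>
    rw [← C_leadingCoeff_mul_prod_multiset_X_sub_C (p := P) IsAlgClosed.card_roots_eq_natDegree]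
  rw [eval_mul, eval_C, eval_multiset_prod, norm_mul]
  congr 1
  exact (map_multiset_prod (normHom : ℂ →*₀ ℝ) _).trans (by simp [Multiset.map_map])

theorem norm_pow_mul_norm_eval_inv_conj_le (P : ℂ[X]) (hroots : ∀ r ∈ P.roots, ‖r‖ ≤ 1)
    {w : ℂ} (hw : 1 ≤ ‖w‖) :
    ‖w‖ ^ P.natDegree * ‖P.eval (conj w)⁻¹‖ ≤ ‖P.eval w‖ := by
  have hw0 : conj w ≠ 0 := by
    rw [_root_.map_ne_zero]; rintro rfl; norm_num at hw
  have hfactor (r : ℂ) : ‖w‖ * ‖(conj w)⁻¹ - r‖ = ‖1 - conj w * r‖ := by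
    rw [← norm_conj w, ← norm_mul, mul_sub, mul_inv_cancel₀ hw0]
  have hpow : ‖w‖ ^ P.natDegree * (P.roots.map fun r => ‖(conj w)⁻¹ - r‖).prod =
      (P.roots.map fun r => ‖1 - conj w * r‖).prod := by
    simp only [← hfactor, Multiset.prod_map_mul, Multiset.map_const', Multiset.prod_replicate,
      IsAlgClosed.card_roots_eq_natDegree]
  rw [norm_eval_eq_mul_prod_roots, norm_eval_eq_mul_prod_roots, mul_left_comm, hpow]
  gcongr ‖_‖ * ?_
  exact Multiset.prod_map_le_prod_map₀ _ _ (fun _ _ => norm_nonneg _)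
    fun r hr => norm_one_sub_conj_mul_le w r hw (hroots r hr)

theorem norm_eval_inv_conj_lt (P : ℂ[X]) (hdeg : 0 < P.natDegree)
    (hroots : ∀ r ∈ P.roots, ‖r‖ ≤ 1) {w : ℂ} (hw : 1 < ‖w‖) :
    ‖P.eval (conj w)⁻¹‖ < ‖P.eval w‖ := by
  have hP : P ≠ 0 := ne_zero_of_natDegree_gt hdeg
  have hroot : P.eval w ≠ 0 := fun h =>
    hw.not_ge (hroots w ((mem_roots hP).mpr h))
  have hgrowth : 1 < ‖w‖ ^ P.natDegree := one_lt_pow₀ hw hdeg.ne'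
  have := norm_pow_mul_norm_eval_inv_conj_le P hroots hw.le
  nlinarith [norm_pos_iff.mpr hroot, norm_nonneg (P.eval (conj w)⁻¹)]

theorem norm_eq_one_of_norm_eval_eq_norm_eval_inv_conj (P : ℂ[X]) (hdeg : 0 < P.natDegree)
    (hroots : ∀ r ∈ P.roots, ‖r‖ ≤ 1) {w : ℂ} (hw : w ≠ 0)
    (heq : ‖P.eval w‖ = ‖P.eval (conj w)⁻¹‖) : ‖w‖ = 1 := by
  rcases lt_trichotomy ‖w‖ 1 with hlt | heq1 | hgt
  · have hw' : 1 < ‖(conj w)⁻¹‖ := by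
      rwa [norm_inv, norm_conj, one_lt_inv₀ (norm_pos_iff.mpr hw)]
    have := norm_eval_inv_conj_lt P hdeg hroots hw'
    rw [map_inv₀, conj_conj, inv_inv] at this
    exact absurd heq this.ne
  · exact heq1
  · exact absurd heq (norm_eval_inv_conj_lt P hdeg hroots hgt).ne'

theorem norm_eq_one_of_norm_sum_eq (n : ℕ) (hn : 1 ≤ n) (c : ℕ → ℂ) (hcn : c n ≠ 0)
    (hroots : ∀ z : ℂ, ∑ k ∈ range (n + 1), c k * z ^ k = 0 → ‖z‖ ≤ 1) {w : ℂ} (hw : w ≠ 0)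
    (heq : ‖∑ k ∈ range (n + 1), c k * w ^ k‖ = ‖∑ k ∈ range (n + 1), c k * (conj w)⁻¹ ^ k‖) :
    ‖w‖ = 1 := by
  set P : ℂ[X] := ∑ k ∈ range (n + 1), C (c k) * X ^ k
  have hP (x : ℂ) : P.eval x = ∑ k ∈ range (n + 1), c k * x ^ k := by
    simp [P, eval_finsetSum]
  have hdeg : 0 < P.natDegree :=
    hn.trans (le_natDegree_of_ne_zero (by simpa [P] using hcn))
  refine norm_eq_one_of_norm_eval_eq_norm_eval_inv_conj P hdeg (fun r hr => ?_) hw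
    (by simpa only [hP] using heq)
  exact hroots r (hP r ▸ isRoot_of_mem_roots hr)

theorem im_eq_zero_of_norm_exp_I_mul_eq_one {z : ℂ} (h : ‖exp (I * z)‖ = 1) : z.im = 0 := by
  simpa [norm_exp] using h

theorem sum_mul_exp_I_mul (n : ℕ) (c : ℕ → ℂ) (z : ℂ) :
    ∑ k ∈ range (n + 1), c k * exp (I * k * z) = ∑ k ∈ range (n + 1), c k * exp (I * z) ^ k := by
  refine sum_congr rfl fun k _ => ?_
  rw [← exp_nat_mul, mul_left_comm, mul_assoc]

theorem sum_conj_mul_exp_neg_I_mul (n : ℕ) (c : ℕ → ℂ) (z : ℂ) :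
    ∑ k ∈ range (n + 1), conj (c k) * exp (-(I * k * z)) =
      conj (∑ k ∈ range (n + 1), c k * (conj (exp (I * z)))⁻¹ ^ k) := by
  simp only [map_sum, map_mul, map_pow, map_inv₀, conj_conj, ← exp_nat_mul, ← exp_neg]
  refine sum_congr rfl fun k _ => ?_
  ring_nf

/-- **Hermite–Biehler theorem (real-zeros part).** If all zeros of
`p(z) = ∑_{k=0}^{n} c k * z ^ k` (with `n ≥ 1`, `c n ≠ 0`) lie in the closed unit disk, then
the entire functions `A(z) = (1/2)(∑ c_k e^{ikz} + ∑ conj(c_k) e^{-ikz})` and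
`B(z) = (1/(2i))(∑ c_k e^{ikz} − ∑ conj(c_k) e^{-ikz})` have only real zeros. -/
theorem hermite_biehler_real_zeros (n : ℕ) (hn : 1 ≤ n) (c : ℕ → ℂ) (hcn : c n ≠ 0)
    (hroots : ∀ z : ℂ, ∑ k ∈ Finset.range (n + 1), c k * z ^ k = 0 → ‖z‖ ≤ 1) :
    (∀ z : ℂ,
      (1 / 2) * ((∑ k ∈ Finset.range (n + 1), c k * Complex.exp (I * k * z))
        + ∑ k ∈ Finset.range (n + 1), (starRingEnd ℂ) (c k) * Complex.exp (-(I * k * z))) = 0 →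
      z.im = 0) ∧
    (∀ z : ℂ,
      (1 / (2 * I)) * ((∑ k ∈ Finset.range (n + 1), c k * Complex.exp (I * k * z))
        - ∑ k ∈ Finset.range (n + 1), (starRingEnd ℂ) (c k) * Complex.exp (-(I * k * z))) = 0 →
      z.im = 0) := by
  have hreal (z : ℂ) (h : ‖∑ k ∈ range (n + 1), c k * exp (I * z) ^ k‖ =
      ‖∑ k ∈ range (n + 1), c k * (conj (exp (I * z)))⁻¹ ^ k‖) : z.im = 0 :=
    im_eq_zero_of_norm_exp_I_mul_eq_one
      (norm_eq_one_of_norm_sum_eq n hn c hcn hroots (exp_ne_zero _) h)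
  refine ⟨fun z h => hreal z ?_, fun z h => hreal z ?_⟩ <;>
    rw [sum_mul_exp_I_mul, sum_conj_mul_exp_neg_I_mul] at h
  · have hAB := eq_neg_of_add_eq_zero_left ((mul_eq_zero.mp h).resolve_left (by norm_num))
    rw [hAB, norm_neg, norm_conj]
  · have hAB := sub_eq_zero.mp ((mul_eq_zero.mp h).resolve_left (by simp))
    rw [hAB, norm_conj]
end

section
/- Let n ≥ 1 and let a_0, a_1, …, a_n be real numbers with 0 < a_0 < a_1 < ⋯ < a_n. Then the entire function A(z) = Σ_{k=0}^{n} a_k cos(kz), where cos denotes the complex cosine, has only real zeros. -/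
/-!
With `q = exp (i z)` and `P w = ∑ a k * w ^ k`, one has `2 A(z) = P q + P q⁻¹`, and `‖q‖ = 1`
exactly when `z` is real. By the Eneström–Kakeya argument (summation by parts of `(w - 1) P w`
against the nonnegative increments `a (k + 1) - a k`) every root of `P` lies in the closed unit
disk. For `‖w‖ ≥ 1 ≥ ‖r‖` one has `‖1 - conj w * r‖ ≤ ‖w - r‖`, so factoring `P` over its roots
gives `‖q‖ ^ n * ‖P (conj q)⁻¹‖ ≤ ‖P q‖`; as `P` has real coefficients the left side is
`‖q‖ ^ n * ‖P q⁻¹‖`. Hence for `‖q‖ > 1` the two terms cannot cancel, and `‖q‖ < 1` reduces to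
this by `q ↦ q⁻¹`.
-/

open Complex Polynomial Finset ComplexConjugate

theorem sub_one_mul_sum_mul_pow {R : Type*} [CommRing R] (c : ℕ → R) (r : R) (n : ℕ) :
    (r - 1) * ∑ k ∈ range (n + 1), c k * r ^ k =
      c n * r ^ (n + 1) - c 0 - ∑ k ∈ range n, (c (k + 1) - c k) * r ^ (k + 1) := by
  induction n with
  | zero => simp; ring
  | succ n ih =>
    rw [sum_range_succ, mul_add, ih, sum_range_succ]
    ring

theorem norm_le_one_of_sum_mul_pow_eq_zero {n : ℕ} {a : ℕ → ℝ} (h0 : 0 ≤ a 0)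
    (hmono : ∀ k < n, a k ≤ a (k + 1)) (hn : 0 < a n) {r : ℂ}
    (hr : ∑ k ∈ range (n + 1), (a k : ℂ) * r ^ k = 0) : ‖r‖ ≤ 1 := by
  by_contra! hr1
  have key := sub_one_mul_sum_mul_pow (fun k ↦ (a k : ℂ)) r n
  rw [hr, mul_zero, eq_comm, sub_sub, sub_eq_zero] at key
  have hle : a n * ‖r‖ ^ (n + 1) ≤ a n * ‖r‖ ^ n := calc
    a n * ‖r‖ ^ (n + 1) = ‖(a n : ℂ) * r ^ (n + 1)‖ := by
      simp [abs_of_pos hn]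
    _ ≤ a 0 + ∑ k ∈ range n, (a (k + 1) - a k) * ‖r‖ ^ (k + 1) := by
      rw [key]
      refine (norm_add_le _ _).trans (add_le_add (by simp [abs_of_nonneg h0]) ?_)
      refine (norm_sum_le _ _).trans (sum_le_sum fun k hk ↦ ?_)
      have := hmono k (mem_range.1 hk)
      simp [← ofReal_sub, abs_of_nonneg (sub_nonneg.2 this)]
    _ ≤ a 0 * ‖r‖ ^ n + ∑ k ∈ range n, (a (k + 1) - a k) * ‖r‖ ^ n := by
      refine add_le_add (le_mul_of_one_le_right h0 (one_le_pow₀ hr1.le))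
        (sum_le_sum fun k hk ↦ ?_)
      have hk := mem_range.1 hk
      gcongr
      exacts [sub_nonneg.2 (hmono k hk), hr1.le, hk]
    _ = a n * ‖r‖ ^ n := by rw [← sum_mul, sum_range_sub]; ring
  exact hle.not_gt (mul_lt_mul_of_pos_left (pow_lt_pow_right₀ hr1 n.lt_succ_self) hn)

theorem norm_one_sub_conj_mul_le_norm_sub {w r : ℂ} (hw : 1 ≤ ‖w‖) (hr : ‖r‖ ≤ 1) :
    ‖1 - conj w * r‖ ≤ ‖w - r‖ := by
  rw [← sq_le_sq₀ (norm_nonneg _) (norm_nonneg _), Complex.sq_norm, Complex.sq_norm, normSq_sub,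
    normSq_sub]
  have hwr : (1 * conj (conj w * r)).re = (w * conj r).re := by simp
  rw [hwr, normSq_one, normSq_mul, normSq_conj, ← Complex.sq_norm, ← Complex.sq_norm]
  have hw2 : 1 ≤ ‖w‖ ^ 2 := one_le_pow₀ hw
  have hr2 : ‖r‖ ^ 2 ≤ 1 := pow_le_one₀ (norm_nonneg r) hr
  nlinarith [mul_nonneg (sub_nonneg.2 hw2) (sub_nonneg.2 hr2)]

theorem pow_natDegree_mul_norm_eval_inv_conj_le {p : ℂ[X]} (hroots : ∀ r ∈ p.roots, ‖r‖ ≤ 1)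
    {w : ℂ} (hw : 1 ≤ ‖w‖) : ‖w‖ ^ p.natDegree * ‖p.eval (conj w)⁻¹‖ ≤ ‖p.eval w‖ := by
  have hw0 : conj w ≠ 0 := (_root_.map_ne_zero _).2 (norm_pos_iff.1 (zero_lt_one.trans_le hw))
  have hfactor : ∀ r, ‖w‖ * ‖(conj w)⁻¹ - r‖ = ‖1 - conj w * r‖ := fun r ↦ by
    rw [← norm_conj w, ← norm_mul, mul_sub, mul_inv_cancel₀ hw0]
  have hnorm (m : Multiset ℂ) : ‖m.prod‖ = (m.map (‖·‖)).prod := map_multiset_prod normHom m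
  have hsplit := IsAlgClosed.splits p
  rw [hsplit.eval_eq_prod_roots, hsplit.eval_eq_prod_roots, norm_mul, norm_mul, mul_left_comm,
    ← IsAlgClosed.card_roots_eq_natDegree, ← Multiset.prod_replicate, ← Multiset.map_const',
    hnorm, hnorm, Multiset.map_map, Multiset.map_map, ← Multiset.prod_map_mul]
  gcongr
  refine Multiset.prod_map_le_prod_map₀ _ _
    (fun _ _ ↦ by simp only [Function.comp_apply]; positivity) fun r hr ↦ ?_
  simpa [hfactor] using norm_one_sub_conj_mul_le_norm_sub hw (hroots r hr)

theorem aeval_add_aeval_inv_ne_zero {P : ℝ[X]} (hroots : ∀ r : ℂ, aeval r P = 0 → ‖r‖ ≤ 1)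
    (hdeg : 0 < P.natDegree) {q : ℂ} (hq0 : q ≠ 0) (hq : ‖q‖ ≠ 1) :
    aeval q P + aeval q⁻¹ P ≠ 0 := by
  wlog hq1 : 1 < ‖q‖ generalizing q
  · have hinv : 1 < ‖q⁻¹‖ := by
      rw [norm_inv, one_lt_inv₀ (norm_pos_iff.2 hq0)]
      exact lt_of_le_of_ne (not_lt.1 hq1) hq
    simpa [add_comm] using this (inv_ne_zero hq0) hinv.ne' hinv
  have hP : 0 < ‖aeval q P‖ := norm_pos_iff.2 fun h ↦ (hroots q h).not_gt hq1
  have key := pow_natDegree_mul_norm_eval_inv_conj_le (p := P.map (algebraMap ℝ ℂ))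
    (fun r hr ↦ hroots r (by simpa using (mem_roots'.1 hr).2)) hq1.le
  rw [natDegree_map, eval_map_algebraMap, eval_map_algebraMap, ← map_inv₀,
    ← conjAe_coe, aeval_algHom_apply, conjAe_coe, norm_conj] at key
  intro h
  rw [eq_neg_of_add_eq_zero_right h, norm_neg] at key
  exact (one_lt_pow₀ hq1 hdeg.ne').not_ge ((mul_le_iff_le_one_left hP).1 key)

theorem two_mul_sum_mul_cos (s : Finset ℕ) (c : ℕ → ℂ) (z : ℂ) :
    2 * ∑ k ∈ s, c k * cos (k * z) =
      ∑ k ∈ s, c k * exp (z * I) ^ k + ∑ k ∈ s, c k * (exp (z * I))⁻¹ ^ k := by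
  rw [mul_sum, ← sum_add_distrib]
  refine sum_congr rfl fun k _ ↦ ?_
  rw [mul_left_comm, two_cos, ← exp_nat_mul, ← exp_neg, ← exp_nat_mul]
  ring_nf

/-- If `0 < a 0 < a 1 < ⋯ < a n` (with `n ≥ 1`), then the entire function
`A(z) = ∑_{k=0}^{n} a k * cos (k z)` (complex cosine) has only real zeros. -/
theorem cos_sum_real_zeros (n : ℕ) (hn : 1 ≤ n) (a : ℕ → ℝ)
    (ha0 : 0 < a 0) (hmono : ∀ k, k < n → a k < a (k + 1)) :
    ∀ z : ℂ, ∑ k ∈ Finset.range (n + 1), (a k : ℂ) * Complex.cos (k * z) = 0 → z.im = 0 := by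
  intro z hz
  set P : ℝ[X] := ∑ k ∈ range (n + 1), C (a k) * X ^ k
  have haeval (w : ℂ) : aeval w P = ∑ k ∈ range (n + 1), (a k : ℂ) * w ^ k := by simp [P]
  have han : 0 < a n := ha0.trans_le <|
    (strictMonoOn_Iic_of_lt_succ hmono).monotoneOn (Set.mem_Iic.2 n.zero_le) Set.self_mem_Iic
      n.zero_le
  have hcoeff : P.coeff n = a n := by simp [P]
  have hdeg : 0 < P.natDegree := hn.trans (le_natDegree_of_ne_zero (hcoeff ▸ han.ne'))
  have hroots (r : ℂ) (hr : aeval r P = 0) : ‖r‖ ≤ 1 :=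
    norm_le_one_of_sum_mul_pow_eq_zero ha0.le (fun k hk ↦ (hmono k hk).le) han (haeval r ▸ hr)
  by_contra him
  refine aeval_add_aeval_inv_ne_zero hroots hdeg (exp_ne_zero (z * I))
    (by simpa [norm_exp] using him) ?_
  rw [haeval, haeval, ← two_mul_sum_mul_cos, hz, mul_zero]
end

section
/- Let n ≥ 1 and let a_0, a_1, …, a_n be real numbers with 0 < a_0 < a_1 < ⋯ < a_n. Then the entire function B(z) = Σ_{k=1}^{n} a_k sin(kz), where sin denotes the complex sine, has only real zeros. -/
/-!
With `u = exp (z * I)` one has `B z = (P u⁻¹ - P u) * I / 2` for `P x = ∑_{k=0}^{n} a k * x ^ k`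
(the `k = 0` term cancels). By Eneström–Kakeya all roots of `P` lie in the closed unit disk, and
for such a root `r` and `‖w‖ > 1` one has `‖w⁻¹ - r‖ < ‖conj w - r‖`. Multiplying over the roots
and using `P (conj w) = conj (P w)` gives `‖P w⁻¹‖ < ‖P w‖` whenever `‖w‖ > 1`, so `P u⁻¹ = P u`
forces `‖u‖ = 1`, i.e. `z.im = 0`.
-/

open Finset Complex Polynomial ComplexConjugate

theorem apply_zero_le_of_le_succ {α : Type*} [Preorder α] {c : ℕ → α} {m : ℕ}
    (hmono : ∀ k < m, c k ≤ c (k + 1)) : c 0 ≤ c m := by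
  induction m with
  | zero => exact le_rfl
  | succ m ih => exact (ih fun k hk => hmono k (by omega)).trans (hmono m m.lt_succ_self)

theorem one_sub_mul_sum_range_mul_pow {R : Type*} [CommRing R] (c : ℕ → R) (x : R) (m : ℕ) :
    (1 - x) * ∑ k ∈ range (m + 1), c k * x ^ k
      = c 0 + ∑ k ∈ range m, (c (k + 1) - c k) * x ^ (k + 1) - c m * x ^ (m + 1) := by
  induction m with
  | zero => simp; ring
  | succ m ih =>
    rw [sum_range_succ, mul_add, ih, sum_range_succ]
    ring

/-- The Eneström–Kakeya theorem. -/
theorem norm_le_one_of_sum_mul_pow_eq_zero_s3 {c : ℕ → ℝ} {m : ℕ} (h0 : 0 < c 0)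
    (hmono : ∀ k < m, c k ≤ c (k + 1)) {x : ℂ}
    (hx : ∑ k ∈ range (m + 1), (c k : ℂ) * x ^ k = 0) : ‖x‖ ≤ 1 := by
  by_contra! hx1
  have hcm : 0 < c m := h0.trans_le (apply_zero_le_of_le_succ hmono)
  have hlead : (c m : ℂ) * x ^ (m + 1)
      = c 0 + ∑ k ∈ range m, ((c (k + 1) - c k : ℝ) : ℂ) * x ^ (k + 1) := by
    have := one_sub_mul_sum_range_mul_pow (fun k => (c k : ℂ)) x m
    push_cast
    linear_combination this - (1 - x) * hx
  have hle : c m * ‖x‖ ^ (m + 1) ≤ c m * ‖x‖ ^ m :=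
    calc c m * ‖x‖ ^ (m + 1)
        = ‖(c 0 : ℂ) + ∑ k ∈ range m, ((c (k + 1) - c k : ℝ) : ℂ) * x ^ (k + 1)‖ := by
          rw [← hlead, norm_mul, norm_pow, norm_real, Real.norm_of_nonneg hcm.le]
      _ ≤ c 0 + ∑ k ∈ range m, (c (k + 1) - c k) * ‖x‖ ^ (k + 1) := by
          refine (norm_add_le _ _).trans (add_le_add ?_ ((norm_sum_le _ _).trans ?_))
          · rw [norm_real, Real.norm_of_nonneg h0.le]
          · refine sum_le_sum fun k hk => ?_
            rw [norm_mul, norm_pow, norm_real,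
              Real.norm_of_nonneg (sub_nonneg.2 (hmono k (mem_range.1 hk)))]
      _ ≤ c 0 * ‖x‖ ^ m + ∑ k ∈ range m, (c (k + 1) - c k) * ‖x‖ ^ m := by
          refine add_le_add (le_mul_of_one_le_right h0.le (one_le_pow₀ hx1.le))
            (sum_le_sum fun k hk => mul_le_mul_of_nonneg_left ?_ ?_)
          · exact pow_le_pow_right₀ hx1.le (mem_range.1 hk)
          · exact sub_nonneg.2 (hmono k (mem_range.1 hk))
      _ = c m * ‖x‖ ^ m := by rw [← sum_mul, sum_range_sub]; ring
  rw [pow_succ, ← mul_assoc, mul_le_iff_le_one_right (by positivity)] at hle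
  exact hle.not_gt hx1

theorem norm_inv_sub_lt_norm_conj_sub {w r : ℂ} (hw : 1 < ‖w‖) (hr : ‖r‖ ≤ 1) :
    ‖w⁻¹ - r‖ < ‖conj w - r‖ := by
  have hw0 : w ≠ 0 := norm_pos_iff.1 (one_pos.trans hw)
  have hinv : w⁻¹ - r = (1 - r * w) / w := by field_simp
  rw [hinv, norm_div, div_lt_iff₀ (one_pos.trans hw), ← norm_mul]
  refine lt_of_pow_lt_pow_left₀ 2 (norm_nonneg _) ?_
  have hre : (r * w).re ≤ ‖w‖ := (re_le_norm _).trans (by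
    rw [norm_mul]; exact mul_le_of_le_one_left (norm_nonneg _) hr)
  have hconj : (conj w - r) * w = ((‖w‖ ^ 2 : ℝ) : ℂ) - r * w := by
    rw [sub_mul, conj_mul', mul_comm]; push_cast; ring
  rw [hconj, Complex.sq_norm, Complex.sq_norm, normSq_sub, normSq_sub, normSq_one, normSq_ofReal,
    ← Complex.sq_norm, norm_mul, one_mul, re_ofReal_mul, conj_re]
  -- the difference of the two sides is `(‖w‖ ^ 2 - 1) * (‖w‖ ^ 2 + 1 - 2 * (r * w).re)`
  have hR : 0 < ‖w‖ ^ 2 - 1 := by nlinarith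
  nlinarith [mul_pos hR (by nlinarith : 0 < ‖w‖ ^ 2 + 1 - 2 * (r * w).re)]

theorem Polynomial.norm_eval_inv_lt_norm_eval_conj {p : ℂ[X]} (hp : 0 < p.natDegree)
    (hroots : ∀ r ∈ p.roots, ‖r‖ ≤ 1) {w : ℂ} (hw : 1 < ‖w‖) :
    ‖p.eval w⁻¹‖ < ‖p.eval (conj w)‖ := by
  have hp0 : p ≠ 0 := ne_zero_of_natDegree_gt hp
  have hnorm (v : ℂ) : ‖p.eval v‖ = ‖p.leadingCoeff‖ * (p.roots.map (‖v - ·‖)).prod := by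
    rw [(IsAlgClosed.splits p).eval_eq_prod_roots, norm_mul]
    exact congrArg _ ((map_multiset_prod (normHom : ℂ →*₀ ℝ) _).trans
      (congrArg _ (Multiset.map_map _ _ _)))
  have hconj : p.eval (conj w) ≠ 0 := fun h =>
    ((norm_conj w).symm ▸ hw).not_ge (hroots _ ((mem_roots hp0).2 h))
  by_cases hinv : p.eval w⁻¹ = 0
  · simpa [hinv] using hconj
  have hroots_ne : p.roots ≠ 0 := by
    rw [← Multiset.card_pos, IsAlgClosed.card_roots_eq_natDegree]; exact hp
  rw [hnorm, hnorm]
  refine mul_lt_mul_of_pos_left (Multiset.prod_map_lt_prod_map hroots_ne _ _ ?_ ?_)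
    (norm_pos_iff.2 (leadingCoeff_ne_zero.2 hp0))
  · intro r hr
    refine norm_pos_iff.2 (sub_ne_zero.2 fun h => hinv ?_)
    exact h ▸ (mem_roots hp0).1 hr
  · exact fun r hr => norm_inv_sub_lt_norm_conj_sub hw (hroots r hr)

theorem norm_sum_mul_inv_pow_lt {c : ℕ → ℝ} {m : ℕ} (hm : 1 ≤ m) (h0 : 0 < c 0)
    (hmono : ∀ k < m, c k ≤ c (k + 1)) {w : ℂ} (hw : 1 < ‖w‖) :
    ‖∑ k ∈ range (m + 1), (c k : ℂ) * w⁻¹ ^ k‖ < ‖∑ k ∈ range (m + 1), (c k : ℂ) * w ^ k‖ := by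
  set p : ℂ[X] := ∑ k ∈ range (m + 1), C (c k : ℂ) * X ^ k
  have heval (v : ℂ) : p.eval v = ∑ k ∈ range (m + 1), (c k : ℂ) * v ^ k := by
    simp [p, eval_finsetSum]
  have hdeg : m ≤ p.natDegree := by
    refine le_natDegree_of_ne_zero ?_
    simpa [p, finsetSum_coeff] using (h0.trans_le (apply_zero_le_of_le_succ hmono)).ne'
  have hroots (r : ℂ) (hr : r ∈ p.roots) : ‖r‖ ≤ 1 :=
    norm_le_one_of_sum_mul_pow_eq_zero_s3 h0 hmono (heval r ▸ isRoot_of_mem_roots hr)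
  have hconj : p.eval (conj w) = conj (p.eval w) := by
    simp [heval, map_sum]
  calc ‖∑ k ∈ range (m + 1), (c k : ℂ) * w⁻¹ ^ k‖ = ‖p.eval w⁻¹‖ := by rw [heval]
    _ < ‖p.eval (conj w)‖ := norm_eval_inv_lt_norm_eval_conj (hm.trans hdeg) hroots hw
    _ = ‖∑ k ∈ range (m + 1), (c k : ℂ) * w ^ k‖ := by rw [hconj, norm_conj, heval]

theorem sum_Icc_one_eq_sum_range {M : Type*} [AddCommMonoid M] {f : ℕ → M} (hf : f 0 = 0)
    (n : ℕ) : ∑ k ∈ Icc 1 n, f k = ∑ k ∈ range (n + 1), f k := by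
  rw [range_eq_Ico, sum_eq_sum_Ico_succ_bot n.succ_pos, hf, zero_add]
  rfl

theorem sum_mul_sin_eq (s : Finset ℕ) (c : ℕ → ℂ) (z : ℂ) :
    ∑ k ∈ s, c k * sin (k * z)
      = (∑ k ∈ s, c k * (exp (z * I))⁻¹ ^ k - ∑ k ∈ s, c k * exp (z * I) ^ k) * I / 2 := by
  rw [← sum_sub_distrib, sum_mul, sum_div]
  refine sum_congr rfl fun k _ => ?_
  rw [sin, ← exp_neg, ← exp_nat_mul, ← exp_nat_mul]
  ring_nf

/-- If `0 < a 0 < a 1 < ⋯ < a n` (with `n ≥ 1`), then the entire function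
`B(z) = ∑_{k=1}^{n} a k * sin (k z)` (complex sine) has only real zeros. -/
theorem sin_sum_real_zeros (n : ℕ) (hn : 1 ≤ n) (a : ℕ → ℝ)
    (ha0 : 0 < a 0) (hmono : ∀ k, k < n → a k < a (k + 1)) :
    ∀ z : ℂ, ∑ k ∈ Finset.Icc 1 n, (a k : ℂ) * Complex.sin (k * z) = 0 → z.im = 0 := by
  intro z hz
  set u := exp (z * I)
  have hsum :
      ∑ k ∈ range (n + 1), (a k : ℂ) * u⁻¹ ^ k = ∑ k ∈ range (n + 1), (a k : ℂ) * u ^ k := by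
    rw [sum_Icc_one_eq_sum_range (by simp), sum_mul_sin_eq] at hz
    simpa [sub_eq_zero, I_ne_zero] using hz
  have hu : ‖u‖ = Real.exp (-z.im) := by simp [u, norm_exp]
  have key (w : ℂ) (hw : 1 < ‖w‖) :=
    norm_sum_mul_inv_pow_lt hn ha0 (fun k hk => (hmono k hk).le) hw
  by_contra him
  rcases Ne.lt_or_gt him with hlt | hgt
  · exact (key u (by rw [hu, Real.one_lt_exp_iff]; linarith)).ne (by rw [hsum])
  · refine (key u⁻¹ ?_).ne (by rw [inv_inv, hsum])
    rwa [norm_inv, hu, ← Real.exp_neg, neg_neg, Real.one_lt_exp_iff]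
end

section
/- Let m ≥ 1 be an integer, a ∈ ℝ, and t ∈ ℝ. Then 4^m · cosh(t/4) · (sinh²(t/m) + 1 − a²)^m = Σ_{j=0}^{m} b_{m,j} · (cosh(2jt/m + t/4) + cosh(2jt/m − t/4)), where b_{m,j} = (1/2) · 4^m · Σ_{k=j}^{m} C(m,k) (1 − a²)^{m−k} a_{k,j}, with a_{0,0} := 1 and, for k ≥ 1, a_{k,0} = (−1)^k 2^{−2k} C(2k,k), a_{k,k} = 2^{1−2k}, and a_{k,j} = (−1)^{k−j} 2^{1−2k} C(2k, k−j) for 0 < j < k. -/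
/-!
Since `2 sinh x = eˣ - e⁻ˣ`, the binomial theorem writes `4ᵏ sinh²ᵏ x` as a sum of exponentials
`e^{2(i-k)x}`, `0 ≤ i ≤ 2k`, with coefficients symmetric about `i = k`; pairing `i = k ± j` turns
it into a cosh-series whose coefficients are `4ᵏ a_{k,j}`. Expanding `(sinh² x + (1 - a²))^m`
binomially and exchanging the two sums gives a cosh-series in `x = t/m`, and
`cosh (u + v) + cosh (u - v) = 2 cosh u cosh v` absorbs the factor `cosh (t/4)`.
-/

/-- The coefficients `a_{k,j}` in the expansion of `sinh^{2k}` as a finite cosh-series,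
with `a_{0,0} = 1`. -/
noncomputable def acoef (k j : ℕ) : ℝ :=
  if j = 0 then (-1 : ℝ) ^ k * (2 : ℝ) ^ (-(2 * k : ℤ)) * (Nat.choose (2 * k) k : ℝ)
  else (-1 : ℝ) ^ (k - j) * (2 : ℝ) ^ ((1 : ℤ) - 2 * k) * (Nat.choose (2 * k) (k - j) : ℝ)

/-- The coefficients `b_{m,j} = (1/2)·4^m·∑_{k=j}^{m} C(m,k)(1−a²)^{m−k} a_{k,j}`. -/
noncomputable def bcoef (m : ℕ) (a : ℝ) (j : ℕ) : ℝ :=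
  (1 / 2) * (4 : ℝ) ^ m *
    ∑ k ∈ Finset.Icc j m, (Nat.choose m k : ℝ) * (1 - a ^ 2) ^ (m - k) * acoef k j

open Finset Real

theorem sum_range_two_mul_add_one_eq_center_add_pairs {M : Type*} [AddCommMonoid M]
    (f : ℕ → M) (k : ℕ) :
    ∑ i ∈ range (2 * k + 1), f i = f k + ∑ j ∈ range k, (f (k + (j + 1)) + f (k - (j + 1))) := by
  rw [two_mul, add_assoc, sum_range_add, sum_range_succ', ← sum_range_reflect f k, sum_add_distrib]
  simp only [Nat.sub_sub, add_comm 1, add_zero]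
  abel

theorem acoef_mul_four_pow (k j : ℕ) :
    acoef k j * 4 ^ k =
      (if j = 0 then 1 else 2) * (-1) ^ (k - j) * ((2 * k).choose (k - j) : ℝ) := by
  have h4 : (4 : ℝ) ^ k = 2 ^ (2 * k : ℤ) := by
    rw [zpow_mul, zpow_ofNat, zpow_natCast]; norm_num
  have hcancel : (2 : ℝ) ^ (-(2 * k : ℤ)) * 2 ^ (2 * k : ℤ) = 1 := by
    rw [← zpow_add₀ two_ne_zero, neg_add_cancel, zpow_zero]
  unfold acoef
  split_ifs with hj
  · subst hj
    rw [h4, Nat.sub_zero]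
    linear_combination ((-1) ^ k * ((2 * k).choose k : ℝ)) * hcancel
  · rw [h4, show (1 : ℤ) - 2 * k = 1 + -(2 * k) by ring, zpow_add₀ two_ne_zero]
    linear_combination (2 * (-1) ^ (k - j) * ((2 * k).choose (k - j) : ℝ)) * hcancel

noncomputable def sinhPowTerm (k : ℕ) (x : ℝ) (i : ℕ) : ℝ :=
  (-1) ^ i * ((2 * k).choose i : ℝ) * exp (2 * ((i : ℝ) - k) * x)

theorem four_pow_mul_sinh_pow_two_mul (k : ℕ) (x : ℝ) :
    4 ^ k * sinh x ^ (2 * k) = ∑ i ∈ range (2 * k + 1), sinhPowTerm k x i := by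
  rw [show (4 : ℝ) ^ k * sinh x ^ (2 * k) = (2 * sinh x) ^ (2 * k) by
      rw [mul_pow, pow_mul 2]; norm_num,
    sinh_eq, mul_div_cancel₀ _ two_ne_zero, sub_pow]
  refine sum_congr rfl fun i hi => ?_
  have hik : i ≤ 2 * k := Nat.lt_succ_iff.mp (mem_range.mp hi)
  have hexp : exp x ^ i * exp (-x) ^ (2 * k - i) = exp (2 * ((i : ℝ) - k) * x) := by
    rw [← exp_nat_mul, ← exp_nat_mul, ← exp_add, Nat.cast_sub hik]
    push_cast
    ring_nf
  rw [sinhPowTerm, pow_add, pow_mul, neg_one_sq, one_pow, mul_one, ← hexp]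
  ring

theorem sinhPowTerm_center (k : ℕ) (x : ℝ) :
    sinhPowTerm k x k = (-1) ^ k * ((2 * k).choose k : ℝ) := by
  simp [sinhPowTerm]

theorem sinhPowTerm_add_reflect (k j : ℕ) (hj : j ≤ k) (x : ℝ) :
    sinhPowTerm k x (k + j) + sinhPowTerm k x (k - j) =
      2 * (-1) ^ (k - j) * ((2 * k).choose (k - j) : ℝ) * cosh (2 * j * x) := by
  have hchoose : (2 * k).choose (k + j) = (2 * k).choose (k - j) := by
    rw [← Nat.choose_symm (by omega)]; congr 1; omega
  have hsign : (-1 : ℝ) ^ (k + j) = (-1) ^ (k - j) := by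
    rw [show k + j = k - j + 2 * j by omega, pow_add, pow_mul, neg_one_sq, one_pow, mul_one]
  rw [sinhPowTerm, sinhPowTerm, hchoose, hsign, Nat.cast_sub hj, cosh_eq]
  push_cast
  ring_nf

theorem sinh_pow_two_mul_eq_sum_acoef_mul_cosh (k : ℕ) (x : ℝ) :
    sinh x ^ (2 * k) = ∑ j ∈ range (k + 1), acoef k j * cosh (2 * j * x) := by
  refine mul_left_cancel₀ (pow_ne_zero k four_ne_zero) ?_
  have hterm : ∀ j, (4 : ℝ) ^ k * (acoef k j * cosh (2 * j * x)) =
      (if j = 0 then 1 else 2) * (-1) ^ (k - j) * ((2 * k).choose (k - j) : ℝ) *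
        cosh (2 * j * x) := by
    intro j
    rw [← acoef_mul_four_pow]
    ring
  rw [four_pow_mul_sinh_pow_two_mul, sum_range_two_mul_add_one_eq_center_add_pairs, mul_sum,
    sum_range_succ', add_comm, hterm, sinhPowTerm_center]
  congr 1
  · refine sum_congr rfl fun j hj => ?_
    rw [sinhPowTerm_add_reflect k (j + 1) (mem_range.mp hj), hterm, if_neg j.succ_ne_zero]
  · simp
theorem sinh_sq_add_pow_eq_sum_cosh (m : ℕ) (c x : ℝ) :
    (sinh x ^ 2 + c) ^ m = ∑ j ∈ range (m + 1),
      (∑ k ∈ Icc j m, (m.choose k : ℝ) * c ^ (m - k) * acoef k j) * cosh (2 * j * x) := by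
  calc (sinh x ^ 2 + c) ^ m
      = ∑ k ∈ range (m + 1), ∑ j ∈ range (k + 1),
          (m.choose k : ℝ) * c ^ (m - k) * acoef k j * cosh (2 * j * x) := by
        rw [add_pow]
        refine sum_congr rfl fun k _ => ?_
        rw [← pow_mul, sinh_pow_two_mul_eq_sum_acoef_mul_cosh, sum_mul, sum_mul]
        exact sum_congr rfl fun j _ => by ring
    _ = ∑ j ∈ range (m + 1), ∑ k ∈ Icc j m,
          (m.choose k : ℝ) * c ^ (m - k) * acoef k j * cosh (2 * j * x) :=
        sum_comm' fun k j => by simp only [mem_range, mem_Icc]; omega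
    _ = _ := sum_congr rfl fun j _ => (sum_mul _ _ _).symm

theorem cosh_expansion_h_general (m : ℕ) (a t : ℝ) :
    (4 : ℝ) ^ m * Real.cosh (t / 4) * (Real.sinh (t / m) ^ 2 + 1 - a ^ 2) ^ m =
      ∑ j ∈ Finset.range (m + 1),
        bcoef m a j *
          (Real.cosh (2 * j * t / m + t / 4) + Real.cosh (2 * j * t / m - t / 4)) := by
  have hcosh : ∀ j : ℕ, cosh (2 * j * t / m + t / 4) + cosh (2 * j * t / m - t / 4) =
      2 * cosh (t / 4) * cosh (2 * j * (t / m)) := by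
    intro j
    rw [cosh_add, cosh_sub, mul_div_assoc]
    ring
  rw [add_sub_assoc, sinh_sq_add_pow_eq_sum_cosh, mul_sum]
  refine sum_congr rfl fun j _ => ?_
  rw [hcosh, bcoef]
  ring

/-- **Lemma 8 of the paper.** For `m ≥ 1`, `a t : ℝ`,
`4^m cosh(t/4) (sinh²(t/m) + 1 − a²)^m
  = ∑_{j=0}^{m} b_{m,j} (cosh(2jt/m + t/4) + cosh(2jt/m − t/4))`. -/
theorem cosh_expansion_h (m : ℕ) (hm : 1 ≤ m) (a t : ℝ) :
    (4 : ℝ) ^ m * Real.cosh (t / 4) * (Real.sinh (t / m) ^ 2 + 1 - a ^ 2) ^ m =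
      ∑ j ∈ Finset.range (m + 1),
        bcoef m a j *
          (Real.cosh (2 * j * t / m + t / 4) + Real.cosh (2 * j * t / m - t / 4)) :=
  cosh_expansion_h_general m a t
end
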